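/- The clobber position ooxoo is equivalent to the clobber position oox. -/

import Mathlib

namespace SetTheory

universe u

inductive PGame : Type (u + 1)
  | mk : ∀ α β : Type u, (α → PGame) → (β → PGame) → PGame

namespace PGame

noncomputable def leLF (x : PGame.{u}) : PGame.{u} → Prop × Prop :=
  PGame.rec (motive := fun _ => PGame.{u} → Prop × Prop)
    (fun _ _ _ _ ihL ihR y =>
      PGame.rec (motive := fun _ => Prop × Prop)
        (fun yl yr yL yR jhL jhR =>
          ((∀ i, (ihL i (mk yl yr yL yR)).2) ∧ ∀ j, (jhR j).2,
           (∃ i, (jhL i).1) ∨ ∃ j, (ihR j (mk yl yr yL yR)).1)) y) x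

def Le (x y : PGame.{u}) : Prop := (leLF x y).1

def Equiv (x y : PGame.{u}) : Prop := Le x y ∧ Le y x

instance : HasEquiv PGame.{u} := ⟨Equiv⟩

instance : Zero PGame.{u} := ⟨mk PEmpty PEmpty PEmpty.elim PEmpty.elim⟩

def ofLists (L R : List PGame.{u}) : PGame.{u} :=
  mk (ULift (Fin L.length)) (ULift (Fin R.length)) (fun i => L.get i.down) fun j => R.get j.down

end PGame

end SetTheory

open SetTheory PGame

inductive Cell | x | o | e
deriving DecidableEq

abbrev Pos := List Cell

/-- All positions reachable by one move of the player with stones `me`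
clobbering an adjacent stone of the opponent `opp`. -/
def movesAux (me opp : Cell) : Pos → List Pos
  | a :: b :: rest =>
      (if a = me ∧ b = opp then [Cell.e :: me :: rest] else []) ++
      (if a = opp ∧ b = me then [me :: Cell.e :: rest] else []) ++
      (movesAux me opp (b :: rest)).map (a :: ·)
  | _ => []

def leftMoves (p : Pos) : List Pos := movesAux Cell.x Cell.o p
def rightMoves (p : Pos) : List Pos := movesAux Cell.o Cell.x p

def stones (p : Pos) : Nat := p.countP (· != Cell.e)

/-- Game value of a clobber position, via fuel recursion (each move removes one stone). -/
def valueFuel : Nat → Pos → PGame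
  | 0, _ => 0
  | n+1, p => PGame.ofLists ((leftMoves p).map (valueFuel n)) ((rightMoves p).map (valueFuel n))

def value (p : Pos) : PGame := valueFuel (stones p) p

/-!
Both positions have value `↓ = {* | 0}`. In `ooxoo` each of Left's two captures leaves a single
pair `ox` (value `* = {0 | 0}`) next to dead stones, and each of Right's two captures leaves only
`o`s (value `0`); `oox` has one option of each kind. Since the game trees are finite and small,
the comparison in both directions is checked by unfolding `valueFuel` and the recursive
characterisation of `≤` on games given by lists of options.
-/

universe u

namespace SetTheory.PGame

theorem leLF_ofLists_fst (L R L' R' : List PGame.{u}) :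
    (leLF (ofLists L R) (ofLists L' R')).1 ↔
      (∀ g ∈ L, (leLF g (ofLists L' R')).2) ∧ ∀ g ∈ R', (leLF (ofLists L R) g).2 := by
  change (∀ i : ULift (Fin L.length), (leLF (L.get i.down) (ofLists L' R')).2) ∧
    (∀ j : ULift (Fin R'.length), (leLF (ofLists L R) (R'.get j.down)).2) ↔ _
  simp only [ULift.forall, List.forall_mem_iff_get]

theorem leLF_ofLists_snd (L R L' R' : List PGame.{u}) :
    (leLF (ofLists L R) (ofLists L' R')).2 ↔
      (∃ g ∈ L', (leLF (ofLists L R) g).1) ∨ ∃ g ∈ R, (leLF g (ofLists L' R')).1 := by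
  change (∃ i : ULift (Fin L'.length), (leLF (ofLists L R) (L'.get i.down)).1) ∨
    (∃ j : ULift (Fin R.length), (leLF (R.get j.down) (ofLists L' R')).1) ↔ _
  simp only [ULift.exists, List.exists_mem_iff_get]

end SetTheory.PGame

theorem valueFuel_succ (n : ℕ) (p : Pos) : valueFuel (n + 1) p =
    ofLists ((leftMoves p).map (valueFuel n)) ((rightMoves p).map (valueFuel n)) := rfl

/-- The clobber position `ooxoo` is equivalent to `oox`. -/
theorem ooxoo_equiv_oox :
    value [Cell.o, Cell.o, Cell.x, Cell.o, Cell.o] ≈ value [Cell.o, Cell.o, Cell.x] := by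
  constructor <;>
    simp [value, stones, valueFuel_succ, leftMoves, rightMoves, movesAux, Le, leLF_ofLists_fst,
      leLF_ofLists_snd]
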